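/- arXiv:2212.03989 — 3 statements merged into one kernel-verified Lean document; each statement's English description precedes it below -/
import Mathlib

section
/- Let β < 0, ε > 0, σ ∈ ℝ, let η : (-∞,0] → ℝ be bounded and measurable, and let g₂ : ℝ³ → ℝ satisfy the joint Lipschitz condition with constant K. Then for every Y₀ ∈ ℝ there exists a constant C ≥ 0, depending only on K, σ, sup_{s≤0}|η(s)|, |g₂(0,0,0)| and β but not on U, such that for every U = (X,Y,Z) ∈ C_β^{3,-}, the function 𝔍₂(U)(t) := Y₀ + ∫_0^t g₂(X(s)+ση(s), Y(s), Z(s)) ds (t ≤ 0) belongs to C_β^- and satisfies ‖𝔍₂(U)‖_β ≤ (K/(-β))‖U‖_{C_β^{3,-}} + |Y₀| + C; the analogous statement holds for 𝔍₃(U)(t) := Z₀ + ∫_0^t g₃(X(s)+ση(s), Y(s), Z(s)) ds with g₃ in place of g₂ and Z₀ in place of Y₀. -/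
open MeasureTheory
open Set

/-- The weighted sup-norm `‖Φ‖_β = sup_{t ≤ 0} e^{-βt} |Φ(t)|`. -/
noncomputable def normBeta (β : ℝ) (Φ : ℝ → ℝ) : ℝ :=
  ⨆ t : Set.Iic (0 : ℝ), Real.exp (-β * t.1) * |Φ t.1|

/-- Membership in `C_β^-`: continuous on `(-∞,0]` with finite weighted sup-norm. -/
def memCbeta (β : ℝ) (Φ : ℝ → ℝ) : Prop :=
  ContinuousOn Φ (Set.Iic 0) ∧
    BddAbove (Set.range fun t : Set.Iic (0 : ℝ) => Real.exp (-β * t.1) * |Φ t.1|)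

/-- Membership in the product space `C_β^{3,-}`. -/
def memCbeta3 (β : ℝ) (X Y Z : ℝ → ℝ) : Prop :=
  memCbeta β X ∧ memCbeta β Y ∧ memCbeta β Z

/-- Norm on `C_β^{3,-}`. -/
noncomputable def normBeta3 (β : ℝ) (X Y Z : ℝ → ℝ) : ℝ :=
  normBeta β X + normBeta β Y + normBeta β Z

/-- Joint Lipschitz condition on `g₁, g₂, g₃ : ℝ³ → ℝ` with constant `K`. -/
def JointLipschitz (K : ℝ) (g₁ g₂ g₃ : ℝ → ℝ → ℝ → ℝ) : Prop :=
  ∀ x y z x' y' z' : ℝ,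
    |g₁ x y z - g₁ x' y' z'| + |g₂ x y z - g₂ x' y' z'| + |g₃ x y z - g₃ x' y' z'| ≤
      K * (|x - x'| + |y - y'| + |z - z'|)

/-- The slow component `𝔍₂(U)(t) = Y₀ + ∫_0^t g(X(s)+ση(s), Y(s), Z(s)) ds`
of the Lyapunov–Perron operator (also `𝔍₃` with `Z₀, g₃`). -/
noncomputable def LPslow (Y₀ σ : ℝ) (η : ℝ → ℝ) (g : ℝ → ℝ → ℝ → ℝ)
    (X Y Z : ℝ → ℝ) : ℝ → ℝ :=
  fun t => Y₀ + ∫ s in (0 : ℝ)..t, g (X s + σ * η s) (Y s) (Z s)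

/-!
The integrand `s ↦ g(X s + σ η s, Y s, Z s)` is bounded, by the Lipschitz condition, by
`c + K ‖U‖ e^{βs}` on `(-∞, 0]`, with `c = |g(0,0,0)| + K |σ| sup |η|`. Integrating from `t` to `0`
and multiplying by `e^{-βt}`, the exponential part contributes `K ‖U‖ (1 - e^{-βt}) / (-β)` and the
constant part `c |t| e^{β|t|} ≤ c / (-β)`, since `a u ≤ e^{a u}`.
-/

open Set Real Topology

section WeightedNorm

variable {β : ℝ} {Φ : ℝ → ℝ}

lemma normBeta_nonneg
    (hΦ : BddAbove (range fun t : Iic (0 : ℝ) => exp (-β * t.1) * |Φ t.1|)) :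
    0 ≤ normBeta β Φ :=
  (by positivity : 0 ≤ exp (-β * 0) * |Φ 0|).trans (le_ciSup hΦ ⟨0, self_mem_Iic⟩)

lemma abs_le_exp_mul_normBeta
    (hΦ : BddAbove (range fun t : Iic (0 : ℝ) => exp (-β * t.1) * |Φ t.1|))
    {s : ℝ} (hs : s ≤ 0) : |Φ s| ≤ exp (β * s) * normBeta β Φ := by
  have hsup : exp (-β * s) * |Φ s| ≤ normBeta β Φ := le_ciSup hΦ ⟨s, hs⟩
  calc |Φ s| = exp (β * s) * (exp (-β * s) * |Φ s|) := by
        rw [← mul_assoc, ← exp_add]; ring_nf; rw [exp_zero, one_mul]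
    _ ≤ exp (β * s) * normBeta β Φ := by gcongr

lemma bddAbove_and_normBeta_le {D : ℝ} (h : ∀ t ≤ (0 : ℝ), exp (-β * t) * |Φ t| ≤ D) :
    BddAbove (range fun t : Iic (0 : ℝ) => exp (-β * t.1) * |Φ t.1|) ∧ normBeta β Φ ≤ D :=
  ⟨⟨D, by rintro _ ⟨t, rfl⟩; exact h t.1 t.2⟩,
    have : Nonempty (Iic (0 : ℝ)) := ⟨⟨0, self_mem_Iic⟩⟩
    ciSup_le fun t => h t.1 t.2⟩

end WeightedNorm

lemma mul_exp_neg_mul_le_one_div {a : ℝ} (ha : 0 < a) (u : ℝ) : u * exp (-(a * u)) ≤ 1 / a := by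
  have h : a * u ≤ exp (a * u) := by linarith [add_one_le_exp (a * u)]
  rw [exp_neg, le_div_iff₀ ha]
  calc u * (exp (a * u))⁻¹ * a = a * u * (exp (a * u))⁻¹ := by ring
    _ ≤ exp (a * u) * (exp (a * u))⁻¹ := by gcongr
    _ = 1 := mul_inv_cancel₀ (exp_pos _).ne'

lemma continuousOn_primitive_Iic {f : ℝ → ℝ} {a : ℝ}
    (hf : ∀ t ≤ a, IntervalIntegrable f volume t a) :
    ContinuousOn (fun t => ∫ s in a..t, f s) (Iic a) := by
  intro t ht
  have hnhds : Icc (t - 1) a ∈ 𝓝[Iic a] t :=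
    mem_nhdsWithin.mpr ⟨Ioi (t - 1), isOpen_Ioi, by simp, fun x hx => ⟨hx.1.le, hx.2⟩⟩
  have hint : IntervalIntegrable f volume (min a (t - 1)) (max a a) := by
    rw [min_eq_right (by linarith [mem_Iic.mp ht]), max_self]
    exact hf _ (by linarith [mem_Iic.mp ht])
  exact (intervalIntegral.continuousWithinAt_primitive (by simp) hint).mono_of_mem_nhdsWithin
    hnhds

lemma integral_exp_mul_to_zero {β : ℝ} (hβ : β ≠ 0) (t : ℝ) :
    ∫ s in t..0, exp (β * s) = (exp (β * t) - 1) / (-β) := by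
  rw [intervalIntegral.integral_comp_mul_left exp hβ, mul_zero, integral_exp, exp_zero,
    smul_eq_mul]
  field_simp
  ring

section Primitive

variable {β : ℝ} {f : ℝ → ℝ} {c A : ℝ}

lemma exp_mul_abs_integral_le (hβ : β < 0) (hc : 0 ≤ c) (hA : 0 ≤ A) {t : ℝ} (ht : t ≤ 0)
    (hf : IntervalIntegrable f volume t 0) (hbound : ∀ s ∈ Icc t 0, |f s| ≤ c + A * exp (β * s)) :
    exp (-β * t) * |∫ s in (0 : ℝ)..t, f s| ≤ (c + A) / (-β) := by
  have hdom : Continuous fun s => c + A * exp (β * s) := by fun_prop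
  have hintegral : |∫ s in (0 : ℝ)..t, f s| ≤ c * (-t) + A * ((exp (β * t) - 1) / (-β)) :=
    calc |∫ s in (0 : ℝ)..t, f s| = |∫ s in t..0, f s| := by
          rw [intervalIntegral.integral_symm, abs_neg]
      _ ≤ ∫ s in t..0, |f s| := intervalIntegral.abs_integral_le_integral_abs ht
      _ ≤ ∫ s in t..0, (c + A * exp (β * s)) :=
          intervalIntegral.integral_mono_on ht hf.abs (hdom.intervalIntegrable _ _) hbound
      _ = c * (-t) + A * ((exp (β * t) - 1) / (-β)) := by
          rw [intervalIntegral.integral_add intervalIntegrable_const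
              ((by fun_prop : Continuous fun s => A * exp (β * s)).intervalIntegrable _ _),
            intervalIntegral.integral_const, intervalIntegral.integral_const_mul,
            integral_exp_mul_to_zero hβ.ne, smul_eq_mul]
          ring
  have hlinear : -t * exp (-β * t) ≤ 1 / (-β) := by
    simpa [neg_mul_neg, mul_comm β t] using mul_exp_neg_mul_le_one_div (neg_pos.mpr hβ) (-t)
  have hexp : exp (-β * t) * exp (β * t) = 1 := by rw [← exp_add]; ring_nf; exact exp_zero
  have hpos : 0 < -β := neg_pos.mpr hβ
  calc exp (-β * t) * |∫ s in (0 : ℝ)..t, f s|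
      ≤ exp (-β * t) * (c * (-t) + A * ((exp (β * t) - 1) / (-β))) := by gcongr
    _ = c * (-t * exp (-β * t)) + A / (-β) * (1 - exp (-β * t)) := by
        linear_combination (A / (-β)) * hexp
    _ ≤ c * (1 / (-β)) + A / (-β) * 1 := by gcongr; linarith [exp_pos (-β * t)]
    _ = (c + A) / (-β) := by ring

theorem memCbeta_const_add_primitive (hβ : β < 0) (hc : 0 ≤ c) (hA : 0 ≤ A) (Y₀ : ℝ)
    (hf_meas : AEStronglyMeasurable f (volume.restrict (Iic 0)))
    (hf_bound : ∀ s ≤ (0 : ℝ), |f s| ≤ c + A * exp (β * s)) :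
    memCbeta β (fun t => Y₀ + ∫ s in (0 : ℝ)..t, f s) ∧
      normBeta β (fun t => Y₀ + ∫ s in (0 : ℝ)..t, f s) ≤ |Y₀| + (c + A) / (-β) := by
  have hint : ∀ t ≤ (0 : ℝ), IntervalIntegrable f volume t 0 := by
    intro t ht
    rw [intervalIntegrable_iff_integrableOn_Icc_of_le ht]
    refine Integrable.mono' ((by fun_prop : Continuous fun s => c + A * exp (β * s)).integrableOn_Icc)
      (hf_meas.mono_measure (Measure.restrict_mono Icc_subset_Iic_self le_rfl)) ?_
    exact (ae_restrict_iff' measurableSet_Icc).mpr (.of_forall fun s hs => hf_bound s hs.2)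
  have hcont : ContinuousOn (fun t => Y₀ + ∫ s in (0 : ℝ)..t, f s) (Iic 0) :=
    continuousOn_const.add (continuousOn_primitive_Iic hint)
  have hweighted : ∀ t ≤ (0 : ℝ),
      exp (-β * t) * |Y₀ + ∫ s in (0 : ℝ)..t, f s| ≤ |Y₀| + (c + A) / (-β) := by
    intro t ht
    have hexp : exp (-β * t) ≤ 1 := exp_le_one_iff.mpr (by nlinarith)
    calc exp (-β * t) * |Y₀ + ∫ s in (0 : ℝ)..t, f s|
        ≤ exp (-β * t) * |Y₀| + exp (-β * t) * |∫ s in (0 : ℝ)..t, f s| := by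
          rw [← mul_add]; gcongr; exact abs_add_le _ _
      _ ≤ 1 * |Y₀| + (c + A) / (-β) := by
          gcongr
          exact exp_mul_abs_integral_le hβ hc hA ht (hint t ht) fun s hs => hf_bound s hs.2
      _ = |Y₀| + (c + A) / (-β) := by ring
  obtain ⟨hbdd, hnorm⟩ := bddAbove_and_normBeta_le hweighted
  exact ⟨⟨hcont, hbdd⟩, hnorm⟩

end Primitive

def Lipschitz₃ (K : ℝ) (g : ℝ → ℝ → ℝ → ℝ) : Prop :=
  ∀ x y z x' y' z' : ℝ, |g x y z - g x' y' z'| ≤ K * (|x - x'| + |y - y'| + |z - z'|)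

namespace Lipschitz₃

variable {K : ℝ} {g : ℝ → ℝ → ℝ → ℝ}

lemma nonneg (hg : Lipschitz₃ K g) : 0 ≤ K := by
  simpa using (abs_nonneg _).trans (hg 1 0 0 0 0 0)

lemma abs_le (hg : Lipschitz₃ K g) (x y z : ℝ) :
    |g x y z| ≤ |g 0 0 0| + K * (|x| + |y| + |z|) := by
  have h := hg x y z 0 0 0
  simp only [sub_zero] at h
  linarith [abs_sub_abs_le_abs_sub (g x y z) (g 0 0 0)]

lemma continuous_uncurry (hg : Lipschitz₃ K g) :
    Continuous fun p : ℝ × ℝ × ℝ => g p.1 p.2.1 p.2.2 := by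
  refine (LipschitzWith.of_dist_le_mul (K := (3 * K).toNNReal) fun p q => ?_).continuous
  have h₁ : |p.1 - q.1| ≤ dist p q := (norm_fst_le (p - q)).trans_eq (dist_eq_norm p q).symm
  have h₂ : |p.2.1 - q.2.1| ≤ dist p q :=
    ((norm_fst_le (p - q).2).trans (norm_snd_le (p - q))).trans_eq (dist_eq_norm p q).symm
  have h₃ : |p.2.2 - q.2.2| ≤ dist p q :=
    ((norm_snd_le (p - q).2).trans (norm_snd_le (p - q))).trans_eq (dist_eq_norm p q).symm
  rw [Real.dist_eq, coe_toNNReal _ (by linarith [hg.nonneg])]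
  nlinarith [hg p.1 p.2.1 p.2.2 q.1 q.2.1 q.2.2, hg.nonneg]

end Lipschitz₃

lemma JointLipschitz.lipschitz₃_snd {K : ℝ} {g₁ g₂ g₃ : ℝ → ℝ → ℝ → ℝ}
    (h : JointLipschitz K g₁ g₂ g₃) : Lipschitz₃ K g₂ := fun x y z x' y' z' => by
  linarith [h x y z x' y' z', abs_nonneg (g₁ x y z - g₁ x' y' z'),
    abs_nonneg (g₃ x y z - g₃ x' y' z')]

lemma JointLipschitz.lipschitz₃_thd {K : ℝ} {g₁ g₂ g₃ : ℝ → ℝ → ℝ → ℝ}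
    (h : JointLipschitz K g₁ g₂ g₃) : Lipschitz₃ K g₃ := fun x y z x' y' z' => by
  linarith [h x y z x' y' z', abs_nonneg (g₁ x y z - g₁ x' y' z'),
    abs_nonneg (g₂ x y z - g₂ x' y' z')]

section Integrand

variable {β σ K M : ℝ} {η X Y Z : ℝ → ℝ} {g : ℝ → ℝ → ℝ → ℝ}

lemma aestronglyMeasurable_integrand (hg : Continuous fun p : ℝ × ℝ × ℝ => g p.1 p.2.1 p.2.2)
    (hη : Measurable η) (hX : ContinuousOn X (Iic 0)) (hY : ContinuousOn Y (Iic 0))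
    (hZ : ContinuousOn Z (Iic 0)) :
    AEStronglyMeasurable (fun s => g (X s + σ * η s) (Y s) (Z s)) (volume.restrict (Iic 0)) :=
  (hg.measurable.comp_aemeasurable
    (((hX.aemeasurable measurableSet_Iic).add (hη.const_mul σ).aemeasurable).prodMk
      ((hY.aemeasurable measurableSet_Iic).prodMk (hZ.aemeasurable measurableSet_Iic))))
    |>.aestronglyMeasurable

lemma abs_integrand_le (hg : Lipschitz₃ K g) (hηM : ∀ s ≤ (0 : ℝ), |η s| ≤ M)
    (hU : memCbeta3 β X Y Z) {s : ℝ} (hs : s ≤ 0) :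
    |g (X s + σ * η s) (Y s) (Z s)| ≤
      (|g 0 0 0| + K * |σ| * M) + K * normBeta3 β X Y Z * exp (β * s) := by
  obtain ⟨⟨-, hX⟩, ⟨-, hY⟩, ⟨-, hZ⟩⟩ := hU
  have hση : |σ * η s| ≤ |σ| * M := by
    rw [abs_mul]; exact mul_le_mul_of_nonneg_left (hηM s hs) (abs_nonneg σ)
  have hsum : |X s + σ * η s| + |Y s| + |Z s| ≤ |σ| * M + exp (β * s) * normBeta3 β X Y Z := by
    unfold normBeta3
    linarith [abs_add_le (X s) (σ * η s), abs_le_exp_mul_normBeta hX hs,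
      abs_le_exp_mul_normBeta hY hs, abs_le_exp_mul_normBeta hZ hs]
  calc |g (X s + σ * η s) (Y s) (Z s)|
      ≤ |g 0 0 0| + K * (|X s + σ * η s| + |Y s| + |Z s|) := hg.abs_le _ _ _
    _ ≤ |g 0 0 0| + K * (|σ| * M + exp (β * s) * normBeta3 β X Y Z) := by
        gcongr; exact hg.nonneg
    _ = _ := by ring

end Integrand

theorem Lipschitz₃.exists_normBeta_LPslow_le {β σ K M : ℝ} {η : ℝ → ℝ} {g : ℝ → ℝ → ℝ → ℝ}
    (hβ : β < 0) (hη : Measurable η) (hηM : ∀ s ≤ (0 : ℝ), |η s| ≤ M) (hg : Lipschitz₃ K g)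
    (Y₀ : ℝ) :
    ∃ C ≥ (0 : ℝ), ∀ X Y Z : ℝ → ℝ, memCbeta3 β X Y Z →
      memCbeta β (LPslow Y₀ σ η g X Y Z) ∧
        normBeta β (LPslow Y₀ σ η g X Y Z) ≤ K / (-β) * normBeta3 β X Y Z + |Y₀| + C := by
  have hM : 0 ≤ M := (abs_nonneg _).trans (hηM 0 le_rfl)
  have hK := hg.nonneg
  refine ⟨(|g 0 0 0| + K * |σ| * M) / (-β), div_nonneg (by positivity) (by linarith), ?_⟩
  intro X Y Z hU
  have hN : 0 ≤ normBeta3 β X Y Z := by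
    obtain ⟨⟨-, hX⟩, ⟨-, hY⟩, ⟨-, hZ⟩⟩ := hU
    unfold normBeta3
    linarith [normBeta_nonneg hX, normBeta_nonneg hY, normBeta_nonneg hZ]
  obtain ⟨hmem, hnorm⟩ := memCbeta_const_add_primitive hβ (by positivity) (by positivity) Y₀
    (aestronglyMeasurable_integrand (σ := σ) hg.continuous_uncurry hη hU.1.1 hU.2.1.1 hU.2.2.1)
    (fun s hs => abs_integrand_le (σ := σ) hg hηM hU hs)
  refine ⟨hmem, hnorm.trans_eq ?_⟩
  ring

theorem lyapunov_perron_slow_bound_general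
    (β : ℝ) (hβ : β < 0) (σ : ℝ)
    (η : ℝ → ℝ) (hη_meas : Measurable η) (hη_bdd : ∃ M : ℝ, ∀ s ≤ (0 : ℝ), |η s| ≤ M)
    (K : ℝ) (g₁ g₂ g₃ : ℝ → ℝ → ℝ → ℝ)
    (hLip : JointLipschitz K g₁ g₂ g₃) (Y₀ Z₀ : ℝ) :
    ∃ C ≥ (0 : ℝ), ∃ C' ≥ (0 : ℝ),
      ∀ X Y Z : ℝ → ℝ, memCbeta3 β X Y Z →
        (memCbeta β (LPslow Y₀ σ η g₂ X Y Z) ∧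
          normBeta β (LPslow Y₀ σ η g₂ X Y Z) ≤
            K / (-β) * normBeta3 β X Y Z + |Y₀| + C) ∧
        (memCbeta β (LPslow Z₀ σ η g₃ X Y Z) ∧
          normBeta β (LPslow Z₀ σ η g₃ X Y Z) ≤
            K / (-β) * normBeta3 β X Y Z + |Z₀| + C') := by
  obtain ⟨M, hηM⟩ := hη_bdd
  obtain ⟨C, hC, hY⟩ := hLip.lipschitz₃_snd.exists_normBeta_LPslow_le (σ := σ) hβ hη_meas hηM Y₀
  obtain ⟨C', hC', hZ⟩ := hLip.lipschitz₃_thd.exists_normBeta_LPslow_le (σ := σ) hβ hη_meas hηM Z₀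
  exact ⟨C, hC, C', hC', fun X Y Z hU => ⟨hY X Y Z hU, hZ X Y Z hU⟩⟩

/-- under `β < 0`, `ε > 0`, `η` bounded and measurable, and the joint
Lipschitz condition with constant `K`, for every `Y₀` (resp. `Z₀`) there is a constant
`C ≥ 0` (resp. `C' ≥ 0`), independent of `U`, such that for every `U = (X,Y,Z) ∈ C_β^{3,-}`
the function `𝔍₂(U)` (resp. `𝔍₃(U)`) belongs to `C_β^-` and
`‖𝔍₂(U)‖_β ≤ (K/(-β))‖U‖_{C_β^{3,-}} + |Y₀| + C` (resp. with `Z₀`, `C'`). -/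
theorem lyapunov_perron_slow_bound
    (β : ℝ) (hβ : β < 0) (ε : ℝ) (hε : 0 < ε) (σ : ℝ)
    (η : ℝ → ℝ) (hη_meas : Measurable η) (hη_bdd : ∃ M : ℝ, ∀ s ≤ (0 : ℝ), |η s| ≤ M)
    (K : ℝ) (hK : 0 < K) (g₁ g₂ g₃ : ℝ → ℝ → ℝ → ℝ)
    (hLip : JointLipschitz K g₁ g₂ g₃) (Y₀ Z₀ : ℝ) :
    ∃ C ≥ (0 : ℝ), ∃ C' ≥ (0 : ℝ),
      ∀ X Y Z : ℝ → ℝ, memCbeta3 β X Y Z →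
        (memCbeta β (LPslow Y₀ σ η g₂ X Y Z) ∧
          normBeta β (LPslow Y₀ σ η g₂ X Y Z) ≤
            K / (-β) * normBeta3 β X Y Z + |Y₀| + C) ∧
        (memCbeta β (LPslow Z₀ σ η g₃ X Y Z) ∧
          normBeta β (LPslow Z₀ σ η g₃ X Y Z) ≤
            K / (-β) * normBeta3 β X Y Z + |Z₀| + C') :=
  lyapunov_perron_slow_bound_general β hβ σ η hη_meas hη_bdd K g₁ g₂ g₃ hLip Y₀ Z₀
end

section
/- Let β < 0, σ ∈ ℝ, let η : (-∞,0] → ℝ be measurable, and let g₂, g₃ : ℝ³ → ℝ satisfy the joint Lipschitz condition with constant K. For U = (X,Y,Z) and Ũ = (X̃,Ỹ,Z̃) in C_β^{3,-}, and the maps 𝔍₂(U)(t) := Y₀ + ∫_0^t g₂(X(s)+ση(s), Y(s), Z(s)) ds and 𝔍₃(U)(t) := Z₀ + ∫_0^t g₃(X(s)+ση(s), Y(s), Z(s)) ds for t ≤ 0, one has ‖𝔍₂(U) - 𝔍₂(Ũ)‖_β ≤ (K/(-β))‖U - Ũ‖_{C_β^{3,-}} and ‖𝔍₃(U) - 𝔍₃(Ũ)‖_β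 ≤ (K/(-β))‖U - Ũ‖_{C_β^{3,-}}. -/
open MeasureTheory

/-- Bounded above for a difference. -/
lemma bddAbove_diff_aux (β : ℝ) {f f' : ℝ → ℝ}
    (h : BddAbove (Set.range fun t : Set.Iic (0 : ℝ) => Real.exp (-β * t.1) * |f t.1|))
    (h' : BddAbove (Set.range fun t : Set.Iic (0 : ℝ) => Real.exp (-β * t.1) * |f' t.1|)) :
    BddAbove (Set.range fun t : Set.Iic (0 : ℝ) =>
      Real.exp (-β * t.1) * |f t.1 - f' t.1|) := by
  obtain ⟨M, hM⟩ := h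
  obtain ⟨M', hM'⟩ := h'
  refine ⟨M + M', ?_⟩
  rintro x ⟨t, rfl⟩
  have h1 : Real.exp (-β * t.1) * |f t.1| ≤ M := hM (Set.mem_range_self t)
  have h2 : Real.exp (-β * t.1) * |f' t.1| ≤ M' := hM' (Set.mem_range_self t)
  have h3 : |f t.1 - f' t.1| ≤ |f t.1| + |f' t.1| := abs_sub _ _
  show Real.exp (-β * t.1) * |f t.1 - f' t.1| ≤ M + M'
  calc Real.exp (-β * t.1) * |f t.1 - f' t.1|
      ≤ Real.exp (-β * t.1) * (|f t.1| + |f' t.1|) :=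
        mul_le_mul_of_nonneg_left h3 (Real.exp_pos _).le
    _ = Real.exp (-β * t.1) * |f t.1| + Real.exp (-β * t.1) * |f' t.1| := mul_add _ _ _
    _ ≤ M + M' := add_le_add h1 h2

/-- `normBeta` is nonnegative. -/
lemma normBeta_nonneg_s2 (β : ℝ) (Φ : ℝ → ℝ) : 0 ≤ normBeta β Φ := by
  apply Real.iSup_nonneg
  intro t
  positivity

/-- Pointwise bound from the weighted sup norm. -/
lemma pointwise_bound (β : ℝ) {f f' : ℝ → ℝ}
    (hbd : BddAbove (Set.range fun t : Set.Iic (0 : ℝ) =>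
      Real.exp (-β * t.1) * |f t.1 - f' t.1|))
    {s : ℝ} (hs : s ≤ 0) :
    |f s - f' s| ≤ Real.exp (β * s) * normBeta β (fun t => f t - f' t) := by
  have h1 : Real.exp (-β * s) * |f s - f' s| ≤ normBeta β (fun t => f t - f' t) :=
    le_ciSup hbd ⟨s, hs⟩
  have h2 : Real.exp (β * s) * (Real.exp (-β * s) * |f s - f' s|) = |f s - f' s| := by
    rw [← mul_assoc, ← Real.exp_add]
    simp
  calc |f s - f' s| = Real.exp (β * s) * (Real.exp (-β * s) * |f s - f' s|) := h2.symm
    _ ≤ Real.exp (β * s) * normBeta β (fun t => f t - f' t) := by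
        exact mul_le_mul_of_nonneg_left h1 (Real.exp_pos _).le

/-- Key contraction estimate for a single Lipschitz `g`. -/
lemma lp_slow_key (β : ℝ) (hβ : β < 0) (σ : ℝ) (η : ℝ → ℝ) (hη : Measurable η)
    (K : ℝ) (hK : 0 < K) (g : ℝ → ℝ → ℝ → ℝ)
    (hg : ∀ x y z x' y' z' : ℝ,
      |g x y z - g x' y' z'| ≤ K * (|x - x'| + |y - y'| + |z - z'|))
    (Y₀ : ℝ) (X Y Z X' Y' Z' : ℝ → ℝ)
    (hU : memCbeta3 β X Y Z) (hU' : memCbeta3 β X' Y' Z') :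
    normBeta β (fun t => LPslow Y₀ σ η g X Y Z t - LPslow Y₀ σ η g X' Y' Z' t) ≤
      K / (-β) * normBeta3 β (fun t => X t - X' t) (fun t => Y t - Y' t)
        (fun t => Z t - Z' t) := by
  have hβ0 : (0:ℝ) < -β := by linarith
  -- continuity of g
  have hgc : Continuous fun p : ℝ × ℝ × ℝ => g p.1 p.2.1 p.2.2 := by
    have hlip : LipschitzWith (Real.toNNReal (3 * K))
        (fun p : ℝ × ℝ × ℝ => g p.1 p.2.1 p.2.2) := by
      apply LipschitzWith.of_dist_le_mul
      intro p q
      have h1 : dist p.1 q.1 ≤ dist p q := by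
        rw [Prod.dist_eq]; exact le_max_left _ _
      have h2 : dist p.2.1 q.2.1 ≤ dist p q := by
        rw [Prod.dist_eq, Prod.dist_eq]
        exact le_trans (le_max_left _ _) (le_max_right _ _)
      have h3 : dist p.2.2 q.2.2 ≤ dist p q := by
        rw [Prod.dist_eq, Prod.dist_eq]
        exact le_trans (le_max_right _ _) (le_max_right _ _)
      rw [Real.coe_toNNReal _ (by positivity : (0:ℝ) ≤ 3 * K)]
      rw [Real.dist_eq] at h1 h2 h3 ⊢
      calc |g p.1 p.2.1 p.2.2 - g q.1 q.2.1 q.2.2|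
          ≤ K * (|p.1 - q.1| + |p.2.1 - q.2.1| + |p.2.2 - q.2.2|) := hg _ _ _ _ _ _
        _ ≤ K * (dist p q + dist p q + dist p q) := by
            apply mul_le_mul_of_nonneg_left _ hK.le
            linarith
        _ = 3 * K * dist p q := by ring
    exact hlip.continuous
  -- bounded-above facts for the differences
  have hbdX := bddAbove_diff_aux β hU.1.2 hU'.1.2
  have hbdY := bddAbove_diff_aux β hU.2.1.2 hU'.2.1.2
  have hbdZ := bddAbove_diff_aux β hU.2.2.2 hU'.2.2.2
  set NX := normBeta β (fun t => X t - X' t) with hNX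
  set NY := normBeta β (fun t => Y t - Y' t) with hNY
  set NZ := normBeta β (fun t => Z t - Z' t) with hNZ
  have hNXn : 0 ≤ NX := normBeta_nonneg_s2 _ _
  have hNYn : 0 ≤ NY := normBeta_nonneg_s2 _ _
  have hNZn : 0 ≤ NZ := normBeta_nonneg_s2 _ _
  set N : ℝ := NX + NY + NZ with hN
  have hNn : 0 ≤ N := by positivity
  have hRHS : normBeta3 β (fun t => X t - X' t) (fun t => Y t - Y' t)
      (fun t => Z t - Z' t) = N := rfl
  rw [hRHS]
  have hRHSn : (0:ℝ) ≤ K / (-β) * N := by positivity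
  -- bound each term of the sup
  apply ciSup_le
  rintro ⟨t, ht⟩
  simp only
  have ht : t ≤ 0 := ht
  set F : ℝ → ℝ := fun s => g (X s + σ * η s) (Y s) (Z s) with hF
  set F' : ℝ → ℝ := fun s => g (X' s + σ * η s) (Y' s) (Z' s) with hF'
  have hdiff : LPslow Y₀ σ η g X Y Z t - LPslow Y₀ σ η g X' Y' Z' t =
      (∫ s in (0:ℝ)..t, F s) - ∫ s in (0:ℝ)..t, F' s := by
    simp [LPslow, hF, hF']
  -- pointwise bound on F - F'
  have hptbd : ∀ s ∈ Set.Icc t 0, |F s - F' s| ≤ K * Real.exp (β * s) * N := by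
    intro s hs
    have hs0 : s ≤ 0 := hs.2
    have hX := pointwise_bound β hbdX hs0
    have hY := pointwise_bound β hbdY hs0
    have hZ := pointwise_bound β hbdZ hs0
    have h1 : |F s - F' s| ≤ K * (|X s + σ * η s - (X' s + σ * η s)| + |Y s - Y' s|
        + |Z s - Z' s|) := hg _ _ _ _ _ _
    have h2 : X s + σ * η s - (X' s + σ * η s) = X s - X' s := by ring
    rw [h2] at h1
    have he : (0:ℝ) ≤ Real.exp (β * s) := (Real.exp_pos _).le
    calc |F s - F' s| ≤ K * (|X s - X' s| + |Y s - Y' s| + |Z s - Z' s|) := h1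
      _ ≤ K * (Real.exp (β * s) * NX + Real.exp (β * s) * NY + Real.exp (β * s) * NZ) := by
          apply mul_le_mul_of_nonneg_left _ hK.le
          linarith [hX, hY, hZ]
      _ = K * Real.exp (β * s) * N := by rw [hN]; ring
  -- measurability of F, F'
  have hmeas : ∀ (A B C : ℝ → ℝ), memCbeta3 β A B C →
      AEStronglyMeasurable (fun s => g (A s + σ * η s) (B s) (C s))
        (volume.restrict (Set.Ioc t 0)) := by
    intro A B C hABC
    have hsub : Set.Ioc t (0:ℝ) ⊆ Set.Iic 0 := Set.Ioc_subset_Iic_self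
    have hA : AEStronglyMeasurable A (volume.restrict (Set.Ioc t 0)) :=
      (hABC.1.1.mono hsub).aestronglyMeasurable measurableSet_Ioc
    have hB : AEStronglyMeasurable B (volume.restrict (Set.Ioc t 0)) :=
      (hABC.2.1.1.mono hsub).aestronglyMeasurable measurableSet_Ioc
    have hC : AEStronglyMeasurable C (volume.restrict (Set.Ioc t 0)) :=
      (hABC.2.2.1.mono hsub).aestronglyMeasurable measurableSet_Ioc
    have hη' : AEStronglyMeasurable (fun s => σ * η s) (volume.restrict (Set.Ioc t 0)) :=
      (hη.const_mul σ).aestronglyMeasurable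
    exact hgc.comp_aestronglyMeasurable ((hA.add hη').prodMk (hB.prodMk hC))
  have hmeasF : AEStronglyMeasurable F (volume.restrict (Set.Ioc t 0)) := hmeas X Y Z hU
  have hmeasF' : AEStronglyMeasurable F' (volume.restrict (Set.Ioc t 0)) := hmeas X' Y' Z' hU'
  -- the dominating function
  have hdomc : Continuous (fun s : ℝ => K * Real.exp (β * s) * N) := by continuity
  have hdomInt : IntervalIntegrable (fun s => K * Real.exp (β * s) * N) volume t 0 :=
    hdomc.intervalIntegrable t 0
  -- integrability of F - F'
  have hIntSub : IntervalIntegrable (fun s => F s - F' s) volume t 0 := by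
    rw [intervalIntegrable_iff, Set.uIoc_of_le ht]
    apply Integrable.mono' (g := fun s => K * Real.exp (β * s) * N)
    · exact hdomc.integrableOn_Ioc
    · exact hmeasF.sub hmeasF'
    · filter_upwards [ae_restrict_mem measurableSet_Ioc] with s hs
      exact hptbd s ⟨hs.1.le, hs.2⟩
  -- compute the integral of the dominating function
  have hβne : β ≠ 0 := hβ.ne
  have hexp_int : ∫ s in t..(0:ℝ), Real.exp (β * s) = (1 - Real.exp (β * t)) / β := by
    have hd : ∀ s ∈ Set.uIcc t (0:ℝ), HasDerivAt (fun u => Real.exp (β * u) / β)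
        (Real.exp (β * s)) s := by
      intro s _
      have h1 : HasDerivAt (fun u : ℝ => β * u) β s := by
        simpa using (hasDerivAt_id s).const_mul β
      have h2 : HasDerivAt (fun u => Real.exp (β * u)) (Real.exp (β * s) * β) s := h1.exp
      have h3 := h2.div_const β
      have : Real.exp (β * s) * β / β = Real.exp (β * s) := by
        field_simp
      rwa [this] at h3
    rw [intervalIntegral.integral_eq_sub_of_hasDerivAt hd
      ((Real.continuous_exp.comp (continuous_const.mul continuous_id)).intervalIntegrable t 0)]
    simp [sub_div]
  have hdom_val : ∫ s in t..(0:ℝ), K * Real.exp (β * s) * N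
      = K * N * ((1 - Real.exp (β * t)) / β) := by
    have : ∀ s : ℝ, K * Real.exp (β * s) * N = (K * N) * Real.exp (β * s) := by
      intro s; ring
    simp_rw [this]
    rw [intervalIntegral.integral_const_mul, hexp_int]
  -- the main bound on |∫F - ∫F'|
  have hmain : |(∫ s in (0:ℝ)..t, F s) - ∫ s in (0:ℝ)..t, F' s|
      ≤ K * N * ((1 - Real.exp (β * t)) / β) := by
    by_cases hFi : IntervalIntegrable F volume t 0
    · have hF'i : IntervalIntegrable F' volume t 0 := by
        have := hFi.sub hIntSub
        simpa using this
      have heq : (∫ s in (0:ℝ)..t, F s) - ∫ s in (0:ℝ)..t, F' s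
          = -∫ s in t..(0:ℝ), (F s - F' s) := by
        rw [intervalIntegral.integral_sub hFi hF'i]
        rw [intervalIntegral.integral_symm t 0 (f := F), intervalIntegral.integral_symm t 0 (f := F')]
        ring
      rw [heq, abs_neg]
      calc |∫ s in t..(0:ℝ), (F s - F' s)| ≤ ∫ s in t..(0:ℝ), |F s - F' s| := by
            simpa [Real.norm_eq_abs] using
              intervalIntegral.norm_integral_le_integral_norm (f := fun s => F s - F' s)
                (μ := volume) ht
        _ ≤ ∫ s in t..(0:ℝ), K * Real.exp (β * s) * N := by
            apply intervalIntegral.integral_mono_on ht hIntSub.abs hdomInt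
            intro s hs
            exact hptbd s hs
        _ = K * N * ((1 - Real.exp (β * t)) / β) := hdom_val
    · have hF'i : ¬ IntervalIntegrable F' volume t 0 := by
        intro hF'i
        apply hFi
        have h7 := hF'i.add hIntSub
        rw [intervalIntegrable_iff] at h7 ⊢
        exact h7.congr (Filter.Eventually.of_forall fun s => by
          show F' s + (F s - F' s) = F s; ring)
      have h1 : (∫ s in (0:ℝ)..t, F s) = 0 := by
        apply intervalIntegral.integral_undef
        intro h; exact hFi h.symm
      have h2 : (∫ s in (0:ℝ)..t, F' s) = 0 := by
        apply intervalIntegral.integral_undef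
        intro h; exact hF'i h.symm
      rw [h1, h2]
      simp only [sub_zero, abs_zero]
      have h3 : Real.exp (β * t) ≥ 1 := by
        rw [ge_iff_le, ← Real.exp_zero]
        apply Real.exp_le_exp.mpr
        nlinarith
      have h4 : 0 ≤ (1 - Real.exp (β * t)) / β := by
        have h5 : (1 - Real.exp (β * t)) / β = (Real.exp (β * t) - 1) / (-β) := by
          rw [div_eq_div_iff hβ.ne (ne_of_gt hβ0)]; ring
        rw [h5]; exact div_nonneg (by linarith) hβ0.le
      exact mul_nonneg (mul_nonneg hK.le hNn) h4
  -- put it together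
  rw [hdiff]
  calc Real.exp (-β * t) * |(∫ s in (0:ℝ)..t, F s) - ∫ s in (0:ℝ)..t, F' s|
      ≤ Real.exp (-β * t) * (K * N * ((1 - Real.exp (β * t)) / β)) := by
        exact mul_le_mul_of_nonneg_left hmain (Real.exp_pos _).le
    _ = K * N * ((Real.exp (-β * t) - 1) / β) := by
        have he : Real.exp (-β * t) * Real.exp (β * t) = 1 := by
          rw [← Real.exp_add, show -β * t + β * t = 0 by ring, Real.exp_zero]
        have hprod : Real.exp (-β * t) * (1 - Real.exp (β * t))
            = Real.exp (-β * t) - 1 := by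
          rw [mul_sub, mul_one, he]
        rw [show Real.exp (-β * t) * (K * N * ((1 - Real.exp (β * t)) / β))
            = K * N * (Real.exp (-β * t) * (1 - Real.exp (β * t)) / β) from by ring, hprod]
    _ ≤ K / (-β) * N := by
        have h5 : Real.exp (-β * t) ≤ 1 := by
          rw [Real.exp_le_one_iff]
          nlinarith
        have h6 : (Real.exp (-β * t) - 1) / β ≤ 1 / (-β) := by
          have he2 : (Real.exp (-β * t) - 1) / β = (1 - Real.exp (-β * t)) / (-β) := by
            rw [div_eq_div_iff hβ.ne (ne_of_gt hβ0)]; ring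
          rw [he2]
          have h7 : (1 - Real.exp (-β * t)) ≤ 1 := by
            nlinarith [Real.exp_pos (-β * t)]
          gcongr
        have h8 : (0:ℝ) ≤ K * N := by positivity
        calc K * N * ((Real.exp (-β * t) - 1) / β) ≤ K * N * (1 / (-β)) :=
              mul_le_mul_of_nonneg_left h6 h8
          _ = K / (-β) * N := by field_simp

/-- under `β < 0`, `η` measurable, and the joint Lipschitz condition with
constant `K`, for all `U = (X,Y,Z)` and `Ũ = (X̃,Ỹ,Z̃)` in `C_β^{3,-}` one has
`‖𝔍₂(U) - 𝔍₂(Ũ)‖_β ≤ (K/(-β))‖U - Ũ‖_{C_β^{3,-}}` and likewise for `𝔍₃`. -/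
theorem lyapunov_perron_slow_contraction
    (β : ℝ) (hβ : β < 0) (σ : ℝ) (η : ℝ → ℝ) (hη_meas : Measurable η)
    (K : ℝ) (hK : 0 < K) (g₁ g₂ g₃ : ℝ → ℝ → ℝ → ℝ)
    (hLip : JointLipschitz K g₁ g₂ g₃) (Y₀ Z₀ : ℝ)
    (X Y Z X' Y' Z' : ℝ → ℝ)
    (hU : memCbeta3 β X Y Z) (hU' : memCbeta3 β X' Y' Z') :
    normBeta β (fun t => LPslow Y₀ σ η g₂ X Y Z t - LPslow Y₀ σ η g₂ X' Y' Z' t) ≤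
      K / (-β) * normBeta3 β (fun t => X t - X' t) (fun t => Y t - Y' t)
        (fun t => Z t - Z' t) ∧
    normBeta β (fun t => LPslow Z₀ σ η g₃ X Y Z t - LPslow Z₀ σ η g₃ X' Y' Z' t) ≤
      K / (-β) * normBeta3 β (fun t => X t - X' t) (fun t => Y t - Y' t)
        (fun t => Z t - Z' t) := by
  constructor
  · apply lp_slow_key β hβ σ η hη_meas K hK g₂ ?_ Y₀ X Y Z X' Y' Z' hU hU'
    intro x y z x' y' z'
    have h := hLip x y z x' y' z'
    have h1 := abs_nonneg (g₁ x y z - g₁ x' y' z')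
    have h3 := abs_nonneg (g₃ x y z - g₃ x' y' z')
    linarith
  · apply lp_slow_key β hβ σ η hη_meas K hK g₃ ?_ Z₀ X Y Z X' Y' Z' hU hU'
    intro x y z x' y' z'
    have h := hLip x y z x' y' z'
    have h1 := abs_nonneg (g₁ x y z - g₁ x' y' z')
    have h2 := abs_nonneg (g₂ x y z - g₂ x' y' z')
    linarith
end

section
/- (Stability of the equilibrium P.) Let ε > 0. Every complex root λ of the polynomial λ³ + 3ελ² + (ε² + 10ε)λ + 5ε² has strictly negative real part; equivalently, every complex eigenvalue of the 3×3 real matrix J_P with rows (0, -10, 5), (ε, -2ε, ε), (0, ε, -ε) has strictly negative real part. Hence P = (1,1,1) is a (linearly) stable equilibrium of the deterministic Koper system. -/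
lemma cubic_root_neg_re (ε : ℝ) (hε : 0 < ε) (l : ℂ)
    (h : l ^ 3 + 3 * (ε : ℂ) * l ^ 2 + ((ε : ℂ) ^ 2 + 10 * (ε : ℂ)) * l +
        5 * (ε : ℂ) ^ 2 = 0) : l.re < 0 := by
  have hre := congrArg Complex.re h
  have him := congrArg Complex.im h
  simp [pow_succ, Complex.mul_re, Complex.mul_im, Complex.add_re, Complex.add_im,
    Complex.ofReal_re, Complex.ofReal_im] at hre him
  by_contra hcon
  push_neg at hcon
  set a := l.re
  set b := l.im
  rcases eq_or_ne b 0 with hb | hb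
  · rw [hb] at hre
    nlinarith [sq_nonneg a, mul_nonneg hcon hcon, mul_pos hε hε,
      mul_nonneg (mul_nonneg hcon hcon) hcon]
  · have hE : b ^ 2 = 3 * a ^ 2 + 6 * ε * a + ε ^ 2 + 10 * ε := by
      have : b * (3 * a ^ 2 - b ^ 2 + 6 * ε * a + ε ^ 2 + 10 * ε) = 0 := by nlinarith [him]
      rcases mul_eq_zero.mp this with h1 | h1
      · exact absurd h1 hb
      · linarith
    nlinarith [hre, hE, mul_nonneg (mul_nonneg hcon hcon) hcon, mul_nonneg hcon hcon,
      mul_pos hε hε, mul_pos (mul_pos hε hε) hε, mul_nonneg hcon hε.le,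
      mul_nonneg (mul_nonneg hcon hcon) hε.le, mul_nonneg hcon (mul_pos hε hε).le]

/-- stability of the equilibrium `P`: for `ε > 0`, every complex root of
`λ³ + 3ελ² + (ε²+10ε)λ + 5ε²` has strictly negative real part; equivalently, every
complex eigenvalue (spectrum element) of the matrix `J_P` with rows `(0,-10,5)`,
`(ε,-2ε,ε)`, `(0,ε,-ε)` has strictly negative real part, so `P = (1,1,1)` is a
(linearly) stable equilibrium. -/
theorem jacobian_eigenvalues_negative_real_part (ε : ℝ) (hε : 0 < ε) :
    (∀ l : ℂ,
      l ^ 3 + 3 * (ε : ℂ) * l ^ 2 + ((ε : ℂ) ^ 2 + 10 * (ε : ℂ)) * l +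
          5 * (ε : ℂ) ^ 2 = 0 → l.re < 0) ∧
    ∀ l ∈ spectrum ℂ
        ((!![(0 : ℝ), -10, 5; ε, -2 * ε, ε; 0, ε, -ε]).map (algebraMap ℝ ℂ)),
      Complex.re l < 0 := by
  refine ⟨fun l h => cubic_root_neg_re ε hε l h, fun l hl => ?_⟩
  apply cubic_root_neg_re ε hε l
  rw [spectrum.mem_iff] at hl
  rw [Matrix.isUnit_iff_isUnit_det, isUnit_iff_ne_zero, not_not] at hl
  rw [Matrix.det_fin_three] at hl
  simp [Matrix.algebraMap_matrix_apply, Matrix.map_apply, Matrix.one_apply] at hl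
  ring_nf
  ring_nf at hl
  linear_combination hl
end
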